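/- Let X be a subshift over a finite alphabet Λ. The collection of all sets of the form V_{α; β₁,…,β_n; γ₁,…,γ_m} = {η ∈ Ω_X : α ∈ η; αβ_i⁻¹ ∈ η for i = 1,…,n; αγ_j⁻¹ ∉ η for j = 1,…,m}, where α, β₁,…,β_n, γ₁,…,γ_m range over 𝔽₊, is a basis for the topology of Ω_X. -/

import Mathlib

open scoped Classical

namespace SubshiftPaper

variable {Λ : Type}

/-- The left shift on infinite words. -/
def shiftMap (x : ℕ → Λ) : ℕ → Λ := fun n => x (n + 1)

/-- Concatenation of a finite word with an infinite word. -/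
def cat (α : List Λ) (y : ℕ → Λ) : ℕ → Λ := fun n => α.getD n (y (n - α.length))

/-- `α` is a prefix of the infinite word `x`. -/
def Pref (α : List Λ) (x : ℕ → Λ) : Prop := ∀ (i : ℕ) (h : i < α.length), x i = α[i]

/-- The tail of `x` after `n` letters. -/
def tail (x : ℕ → Λ) (n : ℕ) : ℕ → Λ := fun i => x (n + i)

/-- `α` occurs in `x` at position `n`. -/
def OccursAt (α : List Λ) (x : ℕ → Λ) (n : ℕ) : Prop :=
  ∀ (i : ℕ) (h : i < α.length), x (n + i) = α[i]

/-- `α` occurs in `x` (as a contiguous block of letters). -/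
def Occurs (α : List Λ) (x : ℕ → Λ) : Prop := ∃ n, OccursAt α x n

/-- `X` is a subshift: a nonempty closed shift-invariant subset. -/
def IsSubshift [TopologicalSpace Λ] (X : Set (ℕ → Λ)) : Prop :=
  X.Nonempty ∧ IsClosed X ∧ ∀ x ∈ X, shiftMap x ∈ X

/-- The set of infinite words avoiding all words in `F`. -/
def ForbidSpace (F : Set (List Λ)) : Set (ℕ → Λ) := {x | ∀ α ∈ F, ¬ Occurs α x}

/-- `X` is a subshift of finite type. -/
def IsSFT (X : Set (ℕ → Λ)) : Prop := ∃ F : Set (List Λ), F.Finite ∧ X = ForbidSpace F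

/-- The follower set of a finite word. -/
def follower (X : Set (ℕ → Λ)) (α : List Λ) : Set (ℕ → Λ) := {y | y ∈ X ∧ cat α y ∈ X}

/-- The cylinder of a finite word. -/
def cylinder (X : Set (ℕ → Λ)) (α : List Λ) : Set (ℕ → Λ) := {x | x ∈ X ∧ Pref α x}

/-- The language of `X`. -/
def Language (X : Set (ℕ → Λ)) : Set (List Λ) := {α | ∃ x ∈ X, Occurs α x}

/-- The embedding of finite words into the free group. -/
def wd (α : List Λ) : FreeGroup Λ := (α.map FreeGroup.of).prod

/-- Indicator function of a set of group elements. -/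
noncomputable def chi (s : Set (FreeGroup Λ)) : FreeGroup Λ → Bool :=
  fun g => if g ∈ s then true else false

/-- The set `ξ_x ⊆ 𝔽`. -/
def xiSet [DecidableEq Λ] (X : Set (ℕ → Λ)) (x : ℕ → Λ) : Set (FreeGroup Λ) :=
  {g | ∃ α β : List Λ, g = wd α * (wd β)⁻¹ ∧
        FreeGroup.norm g = α.length + β.length ∧
        Pref α x ∧ tail x α.length ∈ follower X α ∩ follower X β}

/-- `ξ_x` as an element of `2^𝔽`. -/
noncomputable def xiB [DecidableEq Λ] (X : Set (ℕ → Λ)) (x : ℕ → Λ) : FreeGroup Λ → Bool :=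
  chi (xiSet X x)

/-- The spectrum `Ω_X`: the closure of `{ξ_x : x ∈ X}` in `2^𝔽`. -/
noncomputable def Omega [DecidableEq Λ] (X : Set (ℕ → Λ)) : Set (FreeGroup Λ → Bool) :=
  closure ((fun x => xiB X x) '' X)

/-- Left translation of an element of `2^𝔽`. -/
def translate (g : FreeGroup Λ) (ξ : FreeGroup Λ → Bool) : FreeGroup Λ → Bool :=
  fun h => ξ (g⁻¹ * h)

/-- `x` is the stem of `ξ`: `ξ ∩ 𝔽₊` is exactly the set of prefixes of `x`. -/
def IsStem (ξ : FreeGroup Λ → Bool) (x : ℕ → Λ) : Prop :=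
  {g | ξ g = true} ∩ {g | ∃ α : List Λ, g = wd α} =
    {g | ∃ α : List Λ, g = wd α ∧ Pref α x}

/-- `x` is the stem of `ξ` at `g`: `ξ ∩ g𝔽₊ = {gα : α is a prefix of x}`. -/
def IsStemAt (ξ : FreeGroup Λ → Bool) (g : FreeGroup Λ) (x : ℕ → Λ) : Prop :=
  {h | ξ h = true} ∩ {h | ∃ α : List Λ, h = g * wd α} =
    {h | ∃ α : List Λ, h = g * wd α ∧ Pref α x}

/-- The orbit of `ξ` under the spectral partial action. -/
def Orbit (ξ : FreeGroup Λ → Bool) : Set (FreeGroup Λ → Bool) :=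
  {η | ∃ g : FreeGroup Λ, ξ g⁻¹ = true ∧ η = translate g ξ}

/-- Topological freeness of the spectral partial action. -/
noncomputable def TopFree [DecidableEq Λ] (X : Set (ℕ → Λ)) : Prop :=
  ∀ g : FreeGroup Λ, g ≠ 1 →
    ∀ U : Set (FreeGroup Λ → Bool), IsOpen U →
      (U ∩ Omega X ⊆ {ξ | ξ g⁻¹ = true ∧ translate g ξ = ξ}) → U ∩ Omega X = ∅

/-- The periodic infinite word `γ^∞`. -/
noncomputable def perInf [Nonempty Λ] (γ : List Λ) : ℕ → Λ :=
  fun n => γ.getD (n % γ.length) (Classical.arbitrary Λ)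

/-- `n`-fold concatenation of a finite word with itself. -/
def rep : ℕ → List Λ → List Λ
  | 0, _ => []
  | n + 1, γ => γ ++ rep n γ

/-- `γ` is a circuit relative to `X`. -/
noncomputable def IsCircuit [Nonempty Λ] (X : Set (ℕ → Λ)) (γ : List Λ) : Prop :=
  γ ≠ [] ∧ perInf γ ∈ X

/-- `y` is an exit for the circuit `γ`. -/
noncomputable def IsExit [Nonempty Λ] (X : Set (ℕ → Λ)) (γ : List Λ) (y : ℕ → Λ) : Prop :=
  y ≠ perInf γ ∧ cat γ y ∈ X

/-- `z` is a strong exit for the circuit `γ`. -/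
noncomputable def IsStrongExit [Nonempty Λ] (X : Set (ℕ → Λ)) (γ : List Λ) (z : ℕ → Λ) : Prop :=
  z ≠ perInf γ ∧ ∀ n : ℕ, cat (rep n γ) z ∈ X

/-- The sets `X_g` of the standard partial action. -/
def Xg [DecidableEq Λ] (X : Set (ℕ → Λ)) (g : FreeGroup Λ) : Set (ℕ → Λ) :=
  {x | ∃ α β : List Λ, g = wd α * (wd β)⁻¹ ∧
        FreeGroup.norm g = α.length + β.length ∧
        ∃ y ∈ follower X α ∩ follower X β, x = cat α y}

/-- `x` is a fixed point for `θ_g`. -/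
def IsThetaFixed [DecidableEq Λ] (X : Set (ℕ → Λ)) (g : FreeGroup Λ) (x : ℕ → Λ) : Prop :=
  ∃ α β : List Λ, g = wd α * (wd β)⁻¹ ∧
    FreeGroup.norm g = α.length + β.length ∧
    ∃ y ∈ follower X α ∩ follower X β, x = cat β y ∧ cat α y = x

/-- `x` may be collectively reached from the finite set `B`. -/
def CollReached (X : Set (ℕ → Λ)) (B : Finset (List Λ)) (x : ℕ → Λ) : Prop :=
  ∃ α γ : List Λ, Pref α x ∧ ∀ β ∈ B, cat (β ++ γ) (tail x α.length) ∈ X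

/-- `X` is collectively cofinal. -/
def CollCofinal (X : Set (ℕ → Λ)) : Prop :=
  ∀ B : Finset (List Λ), ↑B ⊆ Language X → (⋂ β ∈ B, follower X β).Nonempty →
    ∀ x ∈ X, CollReached X B x

/-- `X` is strongly cofinal. -/
def StrongCofinal (X : Set (ℕ → Λ)) : Prop :=
  ∀ β ∈ Language X, ∃ M : ℕ, ∀ x ∈ X, ∃ α γ : List Λ, Pref α x ∧
    cat (β ++ γ) (tail x α.length) ∈ X ∧ α.length + γ.length ≤ M

/-- The even shift. -/
def evenShift : Set (ℕ → Fin 2) :=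
  ForbidSpace {w | ∃ n : ℕ, w = 0 :: (List.replicate (2 * n + 1) 1 ++ [0])}


/-!
The sets `{ζ | ζ g = η g for g ∈ I}`, `I ⊆ 𝔽` finite, form a neighbourhood basis of `η` in `2^𝔽`.
Every element of `Ω_X` contains positive words of every length, since each `ξ_x` does and this
is a closed condition; so choose `α ∈ η` with `|α| ≥ |g|` for all `g ∈ I`. If `α ∈ ζ ∈ Ω_X`,
every `g ∈ ζ` with `|g| ≤ |α|` has the form `α γ⁻¹`: for `ζ = ξ_x` the positive part of `g` and
`α` are both prefixes of `x`, and again the condition is closed. Hence, on `{ζ | α ∈ ζ}`, each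
`g ∈ I` either lies in no `ζ` or is `α γ⁻¹` for a single `γ`, and prescribing `η`'s values at
these finitely many `α γ⁻¹` forces agreement with `η` on `I`.
-/

lemma wd_append (α β : List Λ) : wd (α ++ β) = wd α * wd β := by
  simp [wd]

lemma wd_eq_mk (α : List Λ) : wd α = FreeGroup.mk (α.map (·, true)) := by
  induction α with
  | nil => rfl
  | cons a α ih =>
    rw [← List.singleton_append, wd_append, ih]
    exact FreeGroup.mul_mk

lemma toWord_wd [DecidableEq Λ] (α : List Λ) : (wd α).toWord = α.map (·, true) := by
  rw [wd_eq_mk, FreeGroup.toWord_mk, FreeGroup.IsReduced.reduce_eq]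
  simpa [FreeGroup.IsReduced, List.isChain_map] using
    (List.pairwise_of_forall fun _ _ => trivial : α.Pairwise fun _ _ => True).isChain

lemma norm_wd [DecidableEq Λ] (α : List Λ) : FreeGroup.norm (wd α) = α.length := by
  simp [FreeGroup.norm, toWord_wd]

lemma wd_injective : Function.Injective (wd : List Λ → FreeGroup Λ) := by
  intro α β h
  have := congrArg FreeGroup.toWord h
  rw [toWord_wd, toWord_wd] at this
  exact List.map_injective_iff.2 (fun a b hab => congrArg Prod.fst hab) this

lemma tail_mem {X : Set (ℕ → Λ)} (hS : ∀ x ∈ X, shiftMap x ∈ X) {x : ℕ → Λ} (hx : x ∈ X)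
    (n : ℕ) : tail x n ∈ X := by
  induction n with
  | zero =>
    convert hx using 1
    funext i
    simp [tail]
  | succ n ih =>
    convert hS _ ih using 1
    funext i
    simp only [tail, shiftMap]
    ring_nf

lemma cat_tail_of_pref {α : List Λ} {x : ℕ → Λ} (h : Pref α x) : cat α (tail x α.length) = x := by
  funext n
  by_cases hn : n < α.length
  · simp [cat, List.getElem?_eq_getElem hn, h n hn]
  · simp only [cat, tail, List.getD_eq_default _ _ (not_lt.1 hn)]
    congr 1
    omega

lemma Pref.isPrefix_of_length_le {α α' : List Λ} {x : ℕ → Λ} (h : Pref α x) (h' : Pref α' x)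
    (hle : α.length ≤ α'.length) : α <+: α' := by
  rw [List.prefix_iff_eq_take]
  refine List.ext_getElem (by simp [hle]) fun i h₁ h₂ => ?_
  rw [List.getElem_take, ← h i h₁, ← h' i (by omega)]

lemma pref_ofFn (x : ℕ → Λ) (k : ℕ) : Pref (List.ofFn fun i : Fin k => x i) x := by
  intro i h
  simp

section Xi

variable [DecidableEq Λ] {X : Set (ℕ → Λ)} {x : ℕ → Λ}

lemma xiB_eq_true_iff {g : FreeGroup Λ} : xiB X x g = true ↔ g ∈ xiSet X x := by
  simp [xiB, chi]

lemma pref_of_xiB_wd {α : List Λ} (h : xiB X x (wd α) = true) : Pref α x := by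
  obtain ⟨α', β, hg, hn, hα', -⟩ := xiB_eq_true_iff.1 h
  have happ : α ++ β = α' := wd_injective (by rw [wd_append, hg, inv_mul_cancel_right])
  have hβ : β = [] := by
    rw [norm_wd, ← happ, List.length_append] at hn
    exact List.eq_nil_of_length_eq_zero (by omega)
  rw [hβ, List.append_nil] at happ
  rwa [happ]

lemma xiB_wd_of_pref (hS : ∀ x ∈ X, shiftMap x ∈ X) (hx : x ∈ X) {α : List Λ} (h : Pref α x) :
    xiB X x (wd α) = true := by
  refine xiB_eq_true_iff.2 ⟨α, [], by simp [wd], by simp [norm_wd], h, ?_, ?_⟩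
  · exact ⟨tail_mem hS hx _, by rwa [cat_tail_of_pref h]⟩
  · exact ⟨tail_mem hS hx _, tail_mem hS hx _⟩

lemma exists_eq_wd_mul_inv_of_xiB {α : List Λ} {g : FreeGroup Λ} (hα : Pref α x)
    (hg : xiB X x g = true) (hle : FreeGroup.norm g ≤ α.length) :
    ∃ γ, g = wd α * (wd γ)⁻¹ := by
  obtain ⟨α', β, rfl, hn, hα', -⟩ := xiB_eq_true_iff.1 hg
  obtain ⟨δ, rfl⟩ := hα'.isPrefix_of_length_le hα (by omega)
  exact ⟨β ++ δ, by rw [wd_append, wd_append]; group⟩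

end Xi

lemma isClopen_setOf_apply_eq {ι Y : Type*} [TopologicalSpace Y] [DiscreteTopology Y]
    (i : ι) (y : Y) : IsClopen {f : ι → Y | f i = y} :=
  (isClopen_discrete {y}).preimage (continuous_apply i)

section Omega

variable [DecidableEq Λ] {X : Set (ℕ → Λ)} {ζ : FreeGroup Λ → Bool}

lemma forall_mem_omega_of_isClosed {p : (FreeGroup Λ → Bool) → Prop} (hp : IsClosed {ζ | p ζ})
    (h : ∀ x ∈ X, p (xiB X x)) : ∀ ζ ∈ Omega X, p ζ :=
  fun _ hζ => closure_minimal (by rintro - ⟨x, hx, rfl⟩; exact h x hx) hp hζ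

lemma exists_length_eq_of_mem_omega [Finite Λ] (hS : ∀ x ∈ X, shiftMap x ∈ X)
    (hζ : ζ ∈ Omega X) (k : ℕ) : ∃ α : List Λ, α.length = k ∧ ζ (wd α) = true := by
  have hunion : {ζ : FreeGroup Λ → Bool | ∃ α : List Λ, α.length = k ∧ ζ (wd α) = true} =
      ⋃ α ∈ {α : List Λ | α.length = k}, {ζ | ζ (wd α) = true} := by
    ext; simp
  have hclosed : IsClosed {ζ : FreeGroup Λ → Bool | ∃ α : List Λ, α.length = k ∧ ζ (wd α) = true} :=
    hunion ▸ (List.finite_length_eq Λ k).isClosed_biUnion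
      fun α _ => (isClopen_setOf_apply_eq _ _).isClosed
  exact forall_mem_omega_of_isClosed hclosed
    (fun x hx => ⟨_, List.length_ofFn, xiB_wd_of_pref hS hx (pref_ofFn x k)⟩) ζ hζ

lemma exists_eq_wd_mul_inv_of_mem_omega (hζ : ζ ∈ Omega X) {α : List Λ} {g : FreeGroup Λ}
    (hα : ζ (wd α) = true) (hg : ζ g = true) (hle : FreeGroup.norm g ≤ α.length) :
    ∃ γ, g = wd α * (wd γ)⁻¹ := by
  refine forall_mem_omega_of_isClosed
    (p := fun ζ => ζ (wd α) = true ∧ ζ g = true → ∃ γ, g = wd α * (wd γ)⁻¹)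
    (isClosed_imp ((isClopen_setOf_apply_eq _ _).isOpen.inter
      (isClopen_setOf_apply_eq _ _).isOpen) isClosed_const)
    (fun x _ h => exists_eq_wd_mul_inv_of_xiB (pref_of_xiB_wd h.1) h.2 hle) ζ hζ ⟨hα, hg⟩

end Omega

/-- The set `V_{α; β₁,…,β_n; γ₁,…,γ_m}`, taken in `2^𝔽` rather than in `Ω_X`. -/
def basicOpen (α : List Λ) (Bs Cs : List (List Λ)) : Set (FreeGroup Λ → Bool) :=
  {ζ | ζ (wd α) = true ∧ (∀ β ∈ Bs, ζ (wd α * (wd β)⁻¹) = true) ∧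
    (∀ γ ∈ Cs, ζ (wd α * (wd γ)⁻¹) = false)}

lemma isOpen_basicOpen (α : List Λ) (Bs Cs : List (List Λ)) : IsOpen (basicOpen α Bs Cs) := by
  simp only [basicOpen, Set.ofPred_and, Set.ofPred_forall]
  exact (isClopen_setOf_apply_eq _ _).isOpen.inter
    (((List.finite_toSet Bs).isOpen_biInter fun _ _ => (isClopen_setOf_apply_eq _ _).isOpen).inter
      ((List.finite_toSet Cs).isOpen_biInter fun _ _ => (isClopen_setOf_apply_eq _ _).isOpen))

lemma exists_basicOpen_agree [DecidableEq Λ] [Finite Λ] {X : Set (ℕ → Λ)}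
    (hS : ∀ x ∈ X, shiftMap x ∈ X) {η : FreeGroup Λ → Bool} (hη : η ∈ Omega X)
    (I : Finset (FreeGroup Λ)) :
    ∃ α Bs Cs, η ∈ basicOpen α Bs Cs ∧
      ∀ ζ ∈ Omega X, ζ ∈ basicOpen α Bs Cs → ∀ g ∈ I, ζ g = η g := by
  obtain ⟨α, hαk, hηα⟩ := exists_length_eq_of_mem_omega hS hη (I.sup FreeGroup.norm)
  set f : List Λ → FreeGroup Λ := fun γ => wd α * (wd γ)⁻¹
  have hf : Function.Injective f := fun γ γ' h => wd_injective (inv_injective (mul_left_cancel h))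
  have hΓ : (f ⁻¹' I).Finite := I.finite_toSet.preimage hf.injOn
  set Γ := hΓ.toFinset.toList
  refine ⟨α, Γ.filter (η ∘ f), Γ.filter (fun γ => !η (f γ)), ⟨hηα, ?_, ?_⟩, ?_⟩
  · simp [f]
  · simp [f]
  rintro ζ hζ ⟨hζα, hB, hC⟩ g hg
  have hle : FreeGroup.norm g ≤ α.length := hαk ▸ Finset.le_sup hg
  by_cases htrue : ζ g = true ∨ η g = true
  · obtain ⟨γ, rfl⟩ : ∃ γ, g = f γ := htrue.elim
      (exists_eq_wd_mul_inv_of_mem_omega hζ hζα · hle)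
      (exists_eq_wd_mul_inv_of_mem_omega hη hηα · hle)
    cases hηγ : η (f γ)
    · exact hC γ (by simp [Γ, hg, hηγ])
    · exact hB γ (by simp [Γ, hg, hηγ])
  · simp only [not_or, Bool.not_eq_true] at htrue
    rw [htrue.1, htrue.2]

theorem basis_of_omega_general {Λ : Type} [Fintype Λ] [DecidableEq Λ] [TopologicalSpace Λ]
    (X : Set (ℕ → Λ)) (hX : IsSubshift X) :
    TopologicalSpace.IsTopologicalBasis
      {V : Set ↥(Omega X) | ∃ (α : List Λ) (Bs Cs : List (List Λ)),
        V = {η : ↥(Omega X) |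
              (η : FreeGroup Λ → Bool) (wd α) = true ∧
              (∀ β ∈ Bs, (η : FreeGroup Λ → Bool) (wd α * (wd β)⁻¹) = true) ∧
              (∀ γ ∈ Cs, (η : FreeGroup Λ → Bool) (wd α * (wd γ)⁻¹) = false)}} := by
  refine TopologicalSpace.isTopologicalBasis_of_isOpen_of_nhds ?_ fun η u hηu hu => ?_
  · rintro _ ⟨α, Bs, Cs, rfl⟩
    exact (isOpen_basicOpen α Bs Cs).preimage continuous_subtype_val
  obtain ⟨w, hw, rfl⟩ := isOpen_induced_iff.1 hu
  obtain ⟨I, U, hIU, hsub⟩ := isOpen_pi_iff.1 hw η hηu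
  obtain ⟨α, Bs, Cs, hη, hagree⟩ := exists_basicOpen_agree hX.2.2 η.2 I
  refine ⟨Subtype.val ⁻¹' basicOpen α Bs Cs, ⟨α, Bs, Cs, rfl⟩, hη, fun ζ hζ => hsub fun g hg => ?_⟩
  rw [hagree ζ ζ.2 hζ g hg]
  exact (hIU g hg).2

/-- the sets `V_{α;β₁,…,β_n;γ₁,…,γ_m}` form a basis for the topology
of `Ω_X`. -/
theorem basis_of_omega {Λ : Type} [Fintype Λ] [Nonempty Λ] [DecidableEq Λ]
    [TopologicalSpace Λ] [DiscreteTopology Λ]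
    (X : Set (ℕ → Λ)) (hX : IsSubshift X) :
    TopologicalSpace.IsTopologicalBasis
      {V : Set ↥(Omega X) | ∃ (α : List Λ) (Bs Cs : List (List Λ)),
        V = {η : ↥(Omega X) |
              (η : FreeGroup Λ → Bool) (wd α) = true ∧
              (∀ β ∈ Bs, (η : FreeGroup Λ → Bool) (wd α * (wd β)⁻¹) = true) ∧
              (∀ γ ∈ Cs, (η : FreeGroup Λ → Bool) (wd α * (wd γ)⁻¹) = false)}} :=
  basis_of_omega_general X hX

end SubshiftPaper
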